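/- For n ≥ 2, let ζ = exp(2πi/n) and for 0 ≤ k ≤ n define ψ_k = Σ_{S ⊆ [n], |S| = k} (Σ_{j∈S} ζ^j) e_S ∈ ℂ^{2^n}, where the coordinates of ℂ^{2^n} are indexed by subsets S of [n] = {1,…,n}. Then: (i) ψ_0 = ψ_n = 0 and ψ_k ≠ 0 for 1 ≤ k ≤ n−1; (ii) ⟨𝟙_{W_k}, ψ_k⟩ = 0 for all k, where 𝟙_{W_k} = Σ_{|S|=k} e_S; and (iii) A(Q_n) ψ_k = k ψ_{k+1} + (n−k) ψ_{k−1} for 1 ≤ k ≤ n−1, where A(Q_n) is the adjacency matrix of the n-cube. -/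

import Mathlib

/-!
Write `w j = ζ ^ (j + 1)`, so that `ψ_k S = [#S = k] ∑_{j ∈ S} w j`; apart from `ψ_k ≠ 0`, the only
property of the weights that matters is `∑_j w j = 0`. The `T`-coordinate of `A ψ_k` sums `ψ_k`
over the neighbours `T \ {i}` (`i ∈ T`) and `T ∪ {i}` (`i ∉ T`). If `#T = k + 1` this gives
`∑_{i ∈ T} (w(T) - w i) = k w(T)`; if `#T = k - 1` it gives
`∑_{i ∉ T} (w(T) + w i) = (n - k + 1) w(T) + w(Tᶜ) = (n - k) w(T)`. Orthogonality to `𝟙_{W_k}` is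
double counting: every `j` lies in `(n-1).choose (k-1)` sets of size `k`. Finally `ψ_k` does not
vanish at `{1, …, k}`, where its value is `ζ (ζ ^ k - 1) / (ζ - 1) ≠ 0`.
-/

noncomputable section

open Matrix

/-- The adjacency matrix of the `n`-cube `Q_n`, whose vertices are the subsets of
`[n] = {1, …, n}` (modelled as `Finset (Fin n)`, the element `j : Fin n` playing the role
of `j + 1 ∈ [n]`), two subsets being adjacent exactly when their symmetric difference has
one element. -/
def adjCube (n : ℕ) : Matrix (Finset (Fin n)) (Finset (Fin n)) ℂ :=
  Matrix.of fun S T => if (symmDiff S T).card = 1 then 1 else 0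

/-- `ζ = exp(2πi/n)`. -/
def zetaC (n : ℕ) : ℂ := Complex.exp (2 * Real.pi * Complex.I / n)

/-- The vector `ψ_k = ∑_{|S| = k} (∑_{j ∈ S} ζ^j) e_S ∈ ℂ^{2^n}`. -/
def psiVec (n k : ℕ) : Finset (Fin n) → ℂ := fun S =>
  if S.card = k then ∑ j ∈ S, zetaC n ^ ((j : ℕ) + 1) else 0

open Finset
open scoped symmDiff

namespace Finset

variable {α : Type*} [DecidableEq α]

theorem symmDiff_singleton_of_mem {s : Finset α} {a : α} (h : a ∈ s) : s ∆ {a} = s.erase a := by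
  ext x
  by_cases hx : x = a <;> simp_all [mem_symmDiff]

theorem symmDiff_singleton_of_notMem {s : Finset α} {a : α} (h : a ∉ s) :
    s ∆ {a} = insert a s := by
  ext x
  by_cases hx : x = a <;> simp_all [mem_symmDiff]

end Finset

theorem IsPrimitiveRoot.geom_sum_ne_zero {R : Type*} [CommRing R] {ζ : R} {n k : ℕ}
    (hζ : IsPrimitiveRoot ζ n) (hk : k ≠ 0) (hkn : k < n) : ∑ i ∈ range k, ζ ^ i ≠ 0 := by
  intro hsum
  have h := geom_sum_mul ζ k
  rw [hsum, zero_mul, eq_comm, sub_eq_zero] at h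
  exact hζ.pow_ne_one_of_pos_of_lt hk hkn h

theorem adjCube_mulVec_apply {n : ℕ} (v : Finset (Fin n) → ℂ) (T : Finset (Fin n)) :
    (adjCube n *ᵥ v) T = ∑ i, v (T ∆ {i}) := calc
  (adjCube n *ᵥ v) T = ∑ S, if #(T ∆ S) = 1 then v S else 0 := by
    simp [adjCube, mulVec, dotProduct, ite_mul]
  _ = ∑ U, if #U = 1 then v (T ∆ U) else 0 := by
    rw [← Equiv.sum_comp (symmDiff_right_involutive T).toPerm]
    simp [symmDiff_symmDiff_cancel_left]
  _ = ∑ U ∈ powersetCard 1 univ, v (T ∆ U) := by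
    rw [← sum_filter, powersetCard_eq_filter, powerset_univ]
  _ = ∑ i, v (T ∆ {i}) := by
    rw [powersetCard_one, sum_map]
    rfl

section WeightVec

variable {α R : Type*} [CommRing R]

def weightVec (w : α → R) (k : ℕ) (S : Finset α) : R :=
  if #S = k then ∑ j ∈ S, w j else 0

variable (w : α → R)

theorem weightVec_zero : weightVec w 0 = 0 := by
  ext S
  by_cases hS : #S = 0 <;> simp_all [weightVec]

theorem weightVec_card [Fintype α] (hw : ∑ j, w j = 0) : weightVec w (Fintype.card α) = 0 := by
  ext S
  by_cases hS : #S = Fintype.card α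
  · simp [weightVec, (card_eq_iff_eq_univ S).mp hS, hw]
  · simp [weightVec, hS]

theorem sum_weightVec_eq_choose_mul [Fintype α] [DecidableEq α] {k : ℕ} (hk : 1 ≤ k) :
    ∑ S ∈ univ.filter (fun S : Finset α => #S = k), weightVec w k S
      = ((Fintype.card α - 1).choose (k - 1) : R) * ∑ j, w j := calc
  _ = ∑ S ∈ univ.filter (fun S : Finset α => #S = k), ∑ j ∈ S, w j :=
    sum_congr rfl fun S hS => if_pos (mem_filter.mp hS).2
  _ = ∑ j, ∑ S ∈ (powersetCard k univ).filter ({j} ⊆ ·), w j :=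
    sum_comm' fun S j => by simp [mem_powersetCard, and_comm]
  _ = ∑ j, ((Fintype.card α - 1).choose (k - 1) : R) * w j := sum_congr rfl fun j _ => by
    rw [sum_const, card_filter_powersetCard_subset {j} univ k (subset_univ _)
      (by simpa using hk), card_singleton, card_univ, nsmul_eq_mul]
  _ = _ := (mul_sum ..).symm

theorem sum_weightVec_eq_zero [Fintype α] [DecidableEq α] (hw : ∑ j, w j = 0) (k : ℕ) :
    ∑ S ∈ univ.filter (fun S : Finset α => #S = k), weightVec w k S = 0 := by
  rcases Nat.eq_zero_or_pos k with rfl | hk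
  · simp [weightVec_zero]
  · rw [sum_weightVec_eq_choose_mul w hk, hw, mul_zero]

theorem sum_weightVec_erase [DecidableEq α] (k : ℕ) (T : Finset α) :
    ∑ i ∈ T, weightVec w k (T.erase i) = k * weightVec w (k + 1) T := by
  by_cases hT : #T = k + 1
  · calc ∑ i ∈ T, weightVec w k (T.erase i) = ∑ i ∈ T, ((∑ j ∈ T, w j) - w i) := by
          refine sum_congr rfl fun i hi => ?_
          rw [weightVec, if_pos (by rw [card_erase_of_mem hi, hT]; rfl), sum_erase_eq_sub hi]
      _ = k * weightVec w (k + 1) T := by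
          rw [sum_sub_distrib, sum_const, hT, weightVec, if_pos hT]
          ring
  · rw [weightVec, if_neg hT, mul_zero]
    refine sum_eq_zero fun i hi => if_neg ?_
    rw [card_erase_of_mem hi]
    have := card_pos.mpr ⟨i, hi⟩
    omega

theorem sum_weightVec_insert [Fintype α] [DecidableEq α] (hw : ∑ j, w j = 0) (k : ℕ)
    (T : Finset α) :
    ∑ i ∈ Tᶜ, weightVec w (k + 1) (insert i T)
      = ((Fintype.card α : R) - (k + 1)) * weightVec w k T := by
  by_cases hT : #T = k
  · have hsum_compl : ∑ i ∈ Tᶜ, w i = - ∑ j ∈ T, w j := by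
      rw [eq_neg_iff_add_eq_zero, add_comm, sum_add_sum_compl, hw]
    calc ∑ i ∈ Tᶜ, weightVec w (k + 1) (insert i T) = ∑ i ∈ Tᶜ, (w i + ∑ j ∈ T, w j) := by
          refine sum_congr rfl fun i hi => ?_
          rw [mem_compl] at hi
          rw [weightVec, if_pos (by rw [card_insert_of_notMem hi, hT]), sum_insert hi]
      _ = ((Fintype.card α : R) - (k + 1)) * weightVec w k T := by
          rw [sum_add_distrib, hsum_compl, sum_const, card_compl, weightVec, if_pos hT,
            nsmul_eq_mul, Nat.cast_sub (hT ▸ card_le_univ T), hT]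
          ring
  · rw [weightVec, if_neg hT, mul_zero]
    refine sum_eq_zero fun i hi => if_neg ?_
    rw [card_insert_of_notMem (mem_compl.mp hi)]
    omega

theorem sum_weightVec_symmDiff_singleton [Fintype α] [DecidableEq α] (hw : ∑ j, w j = 0)
    {k : ℕ} (hk : 1 ≤ k) (T : Finset α) :
    ∑ i, weightVec w k (T ∆ {i})
      = k * weightVec w (k + 1) T + ((Fintype.card α : R) - k) * weightVec w (k - 1) T := by
  obtain ⟨m, rfl⟩ := Nat.exists_eq_add_of_le' hk
  have h_in : ∑ i ∈ T, weightVec w (m + 1) (T ∆ {i}) = ∑ i ∈ T, weightVec w (m + 1) (T.erase i) :=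
    sum_congr rfl fun i hi => by rw [symmDiff_singleton_of_mem hi]
  have h_out : ∑ i ∈ Tᶜ, weightVec w (m + 1) (T ∆ {i})
      = ∑ i ∈ Tᶜ, weightVec w (m + 1) (insert i T) :=
    sum_congr rfl fun i hi => by rw [symmDiff_singleton_of_notMem (mem_compl.mp hi)]
  rw [← sum_add_sum_compl T, h_in, h_out, sum_weightVec_erase, sum_weightVec_insert w hw,
    Nat.add_sub_cancel]
  push_cast
  ring

end WeightVec

section PrimitiveRoot

variable {R : Type*} [CommRing R] [IsDomain R] {ζ : R} {n : ℕ}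

theorem IsPrimitiveRoot.sum_fin_pow_succ_eq_zero (hζ : IsPrimitiveRoot ζ n) (hn : 1 < n) :
    ∑ j : Fin n, ζ ^ ((j : ℕ) + 1) = 0 := by
  simp_rw [Fin.sum_univ_eq_sum_range (fun j => ζ ^ (j + 1)), pow_succ, ← sum_mul,
    hζ.geom_sum_eq_zero hn, zero_mul]

theorem IsPrimitiveRoot.weightVec_pow_succ_ne_zero (hζ : IsPrimitiveRoot ζ n) {k : ℕ}
    (hk : k ≠ 0) (hkn : k < n) : weightVec (fun j : Fin n => ζ ^ ((j : ℕ) + 1)) k ≠ 0 := by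
  intro h
  have h_initial := congrFun h (univ.map (Fin.castLEEmb hkn.le))
  simp only [weightVec, card_map, card_univ, Fintype.card_fin, if_true, sum_map,
    Fin.coe_castLEEmb, Fin.val_castLE, Pi.zero_apply] at h_initial
  rw [Fin.sum_univ_eq_sum_range (fun j => ζ ^ (j + 1))] at h_initial
  simp_rw [pow_succ', ← mul_sum] at h_initial
  exact mul_ne_zero (hζ.ne_zero (by omega)) (hζ.geom_sum_ne_zero hk hkn) h_initial

end PrimitiveRoot

theorem psiVec_eq_weightVec (n k : ℕ) :
    psiVec n k = weightVec (fun j : Fin n => zetaC n ^ ((j : ℕ) + 1)) k :=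
  rfl

/-- For `n ≥ 2` the vectors `ψ_k` satisfy: (i) `ψ_0 = ψ_n = 0` and `ψ_k ≠ 0` for
`1 ≤ k ≤ n-1`; (ii) `⟨𝟙_{W_k}, ψ_k⟩ = 0` for all `k`; and (iii)
`A(Q_n) ψ_k = k ψ_{k+1} + (n-k) ψ_{k-1}` for `1 ≤ k ≤ n-1`. -/
theorem cube_dark_module (n : ℕ) (hn : 2 ≤ n) :
    (psiVec n 0 = 0 ∧ psiVec n n = 0 ∧
      ∀ k : ℕ, 1 ≤ k → k ≤ n - 1 → psiVec n k ≠ 0) ∧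
    (∀ k : ℕ, ∑ S ∈ Finset.univ.filter (fun S : Finset (Fin n) => S.card = k),
      psiVec n k S = 0) ∧
    (∀ k : ℕ, 1 ≤ k → k ≤ n - 1 →
      adjCube n *ᵥ psiVec n k
        = (k : ℂ) • psiVec n (k + 1) + ((n : ℂ) - (k : ℂ)) • psiVec n (k - 1)) := by
  have hζ : IsPrimitiveRoot (zetaC n) n := Complex.isPrimitiveRoot_exp n (by omega)
  have hw := hζ.sum_fin_pow_succ_eq_zero (by omega)
  simp only [psiVec_eq_weightVec]
  refine ⟨⟨weightVec_zero _, by simpa using weightVec_card _ hw,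
    fun k hk hkn => hζ.weightVec_pow_succ_ne_zero (by omega) (by omega)⟩,
    sum_weightVec_eq_zero _ hw, fun k hk _ => ?_⟩
  ext T
  rw [adjCube_mulVec_apply]
  simpa using sum_weightVec_symmDiff_singleton _ hw hk T
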